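/- Consider the TvN game with n ≥ 2 creators and attention weights satisfying r₁ > r₂ ≥ ⋯ ≥ r_K ≥ 0 = r_{K+1} = ⋯ = rₙ. If s is a local maximizer of the welfare W, then for every k with 2 ≤ k ≤ n at most one creator plays e_k, and consequently W(s) = (n+1) Σ_{i=1}^{min(K,q)} rᵢ + (n − q) r₁, where q is the number of creators playing e₁ in s. -/
import Mathlib


/-- A score vector is "sorted" if it is nonincreasing and takes values in `[0,1]`. -/
def SortedScores (n : ℕ) (σ : Fin n → ℝ) : Prop :=
  (∀ i j : Fin n, i ≤ j → σ j ≤ σ i) ∧ ∀ i, σ i ∈ Set.Icc (0:ℝ) 1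

/-- The sorted score vector consisting of `k` ones followed by zeros. -/
def onesVec (n k : ℕ) : Fin n → ℝ := fun i => if (i : ℕ) < k then 1 else 0

/-- A merit-based monotone mechanism (the class `M³`): `M σ i` is the reward of the
creator holding the `i`-th largest score of the nonincreasing score vector `σ`. -/
structure MeritMonotone (n : ℕ) (M : (Fin n → ℝ) → Fin n → ℝ) : Prop where
  reward_mem : ∀ σ, SortedScores n σ → ∀ i, M σ i ∈ Set.Icc (0:ℝ) 1
  eq_scores : ∀ σ, SortedScores n σ → ∀ i j, σ i = σ j → M σ i = M σ j
  normal_zero : ∀ σ, SortedScores n σ → ∀ i, σ i = 0 → M σ i = 0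
  normal_one : ∀ i : Fin n, onesVec n 1 i = 1 → 0 < M (onesVec n 1) i
  fairness : ∀ σ, SortedScores n σ → ∀ i j : Fin n, i ≤ j → M σ j ≤ M σ i
  neg_ext : ∀ σ σ', SortedScores n σ → SortedScores n σ' → ∀ i, σ' i = σ i →
    (∀ j, j ≠ i → σ j ≤ σ' j) → M σ' i ≤ M σ i
  total_mono : ∀ σ σ', SortedScores n σ → SortedScores n σ' → (∀ j, σ j ≤ σ' j) →
    (∑ i, M σ i) ≤ ∑ i, M σ' i

/-- In the TvN game (strategy `s i : Fin n` = index of the basis vector chosen by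
creator `i`), the number of creators playing `e_j`. -/
def cnt {n : ℕ} (s : Fin n → Fin n) (j : Fin n) : ℕ :=
  (Finset.univ.filter fun i => s i = j).card

/-- Creator `i`'s reward at a user of type `e_j`: the score vector there is
`cnt s j` ones followed by zeros; creator `i` has score `1` iff `s i = j`. -/
def rewardAt {n : ℕ} (M : (Fin n → ℝ) → Fin n → ℝ) (s : Fin n → Fin n)
    (i j : Fin n) : ℝ :=
  if s i = j then M (onesVec n (cnt s j)) ⟨0, i.pos⟩
  else M (onesVec n (cnt s j)) ⟨n - 1, by have := i.pos; omega⟩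

/-- Creator `i`'s total utility in the TvN game: `n+1` users of type `e₁`
(index `0`) and one user of type `e_j` for every other `j`. -/
def utility {n : ℕ} (M : (Fin n → ℝ) → Fin n → ℝ) (s : Fin n → Fin n) (i : Fin n) : ℝ :=
  ∑ j : Fin n, (if (j : ℕ) = 0 then (n + 1 : ℝ) else 1) * rewardAt M s i j

/-- Social welfare of the TvN game with attention weights `r` (0-indexed: `r ⟨0⟩` is the
attention to the top-ranked content): at a user of type `e_j`, the `k`-th largest matching
score is `1` exactly when `k < cnt s j`. -/
def tvnWelfare {n : ℕ} (r : Fin n → ℝ) (s : Fin n → Fin n) : ℝ :=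
  ∑ j : Fin n, (if (j : ℕ) = 0 then (n + 1 : ℝ) else 1) *
    ∑ k : Fin n, (if (k : ℕ) < cnt s j then r k else 0)

/-- A profile `s` is a local maximizer of the welfare `W` if no single creator can
strictly increase `W` by unilaterally changing her strategy. -/
def IsLocalMaxW {n : ℕ} (r : Fin n → ℝ) (s : Fin n → Fin n) : Prop :=
  ∀ (i : Fin n) (s'i : Fin n), tvnWelfare r (Function.update s i s'i) ≤ tvnWelfare r s

namespace Stmt5Aux

/-- Partial sum of the first `m` weights. -/
def Fsum {n : ℕ} (r : Fin n → ℝ) (m : ℕ) : ℝ :=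
  ∑ k : Fin n, if (k : ℕ) < m then r k else 0

lemma Fsum_zero {n : ℕ} (r : Fin n → ℝ) : Fsum r 0 = 0 := by simp [Fsum]

lemma Fsum_succ {n : ℕ} (r : Fin n → ℝ) {m : ℕ} (hm : m < n) :
    Fsum r (m + 1) = Fsum r m + r ⟨m, hm⟩ := by
  have h : ∀ k : Fin n, (if (k:ℕ) < m + 1 then r k else 0) =
      (if (k:ℕ) < m then r k else 0) + (if (k:ℕ) = m then r k else 0) := by
    intro k
    rcases lt_trichotomy (k:ℕ) m with h | h | h
    · simp [h, Nat.lt_succ_of_lt h, Nat.ne_of_lt h]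
    · simp [h]
    · have h1 : ¬ (k:ℕ) < m + 1 := by omega
      have h2 : ¬ (k:ℕ) < m := by omega
      have h3 : (k:ℕ) ≠ m := by omega
      simp [h1, h2, h3]
  simp only [Fsum]
  rw [Finset.sum_congr rfl (fun k _ => h k), Finset.sum_add_distrib]
  congr 1
  rw [Finset.sum_eq_single (⟨m, hm⟩ : Fin n)]
  · simp
  · intro k _ hk
    have : (k:ℕ) ≠ m := fun hh => hk (Fin.ext hh)
    simp [this]
  · simp

lemma tvn_eq {n : ℕ} (r : Fin n → ℝ) (s : Fin n → Fin n) :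
    tvnWelfare r s
      = ∑ j : Fin n, (if (j:ℕ) = 0 then (n+1:ℝ) else 1) * Fsum r (cnt s j) := rfl

lemma sum_cnt {n : ℕ} (s : Fin n → Fin n) : ∑ j : Fin n, cnt s j = n := by
  have := Finset.card_eq_sum_card_fiberwise
    (f := s) (s := Finset.univ) (t := Finset.univ) (fun x _ => Finset.mem_univ _)
  simpa [cnt] using this.symm

lemma cnt_le {n : ℕ} (s : Fin n → Fin n) (j : Fin n) : cnt s j ≤ n := by
  simpa [cnt] using Finset.card_filter_le Finset.univ (fun i => s i = j)

lemma cnt_eq {n : ℕ} (s : Fin n → Fin n) (i j : Fin n) :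
    cnt s j = (∑ x ∈ Finset.univ.erase i, if s x = j then 1 else 0)
      + (if s i = j then 1 else 0) := by
  rw [cnt, Finset.card_filter, ← Finset.sum_erase_add _ _ (Finset.mem_univ i)]

lemma cnt_update_eq {n : ℕ} (s : Fin n → Fin n) (i a j : Fin n) :
    cnt (Function.update s i a) j
      = (∑ x ∈ Finset.univ.erase i, if s x = j then 1 else 0)
        + (if a = j then 1 else 0) := by
  rw [cnt_eq _ i j, Function.update_self]
  congr 1
  exact Finset.sum_congr rfl fun x hx => by
    rw [Function.update_of_ne (Finset.ne_of_mem_erase hx)]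

lemma welfare_update {n : ℕ} (r : Fin n → ℝ) (s : Fin n → Fin n) (i a : Fin n)
    (ha : a ≠ s i) :
    tvnWelfare r (Function.update s i a) =
      tvnWelfare r s
      + (if ((s i : Fin n) : ℕ) = 0 then (n+1:ℝ) else 1) *
          (Fsum r (cnt s (s i) - 1) - Fsum r (cnt s (s i)))
      + (if (a : ℕ) = 0 then (n+1:ℝ) else 1) *
          (Fsum r (cnt s a + 1) - Fsum r (cnt s a)) := by
  classical
  have hpos : 1 ≤ cnt s (s i) := by
    have : i ∈ Finset.univ.filter fun x => s x = s i := by simp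
    have := Finset.card_pos.2 ⟨i, this⟩
    simpa [cnt] using this
  have hsa : s i ≠ a := fun h => ha h.symm
  have h1 : cnt (Function.update s i a) (s i) = cnt s (s i) - 1 := by
    have e1 := cnt_update_eq s i a (s i)
    have e2 := cnt_eq s i (s i)
    rw [if_neg ha] at e1
    rw [if_pos rfl] at e2
    omega
  have h2 : cnt (Function.update s i a) a = cnt s a + 1 := by
    have e1 := cnt_update_eq s i a a
    have e2 := cnt_eq s i a
    rw [if_pos rfl] at e1
    rw [if_neg hsa] at e2
    omega
  have h3 : ∀ j, j ≠ s i → j ≠ a → cnt (Function.update s i a) j = cnt s j := by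
    intro j hj1 hj2
    have e1 := cnt_update_eq s i a j
    have e2 := cnt_eq s i j
    rw [if_neg (fun h => hj2 h.symm)] at e1
    rw [if_neg (fun h => hj1 h.symm)] at e2
    omega
  have hsub : ({s i, a} : Finset (Fin n)) ⊆ Finset.univ := Finset.subset_univ _
  rw [tvn_eq, tvn_eq, ← Finset.sum_sdiff hsub, ← Finset.sum_sdiff hsub]
  have hcongr : ∀ j ∈ Finset.univ \ ({s i, a} : Finset (Fin n)),
      (if (j:ℕ) = 0 then (n+1:ℝ) else 1) * Fsum r (cnt (Function.update s i a) j)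
        = (if (j:ℕ) = 0 then (n+1:ℝ) else 1) * Fsum r (cnt s j) := by
    intro j hj
    rw [Finset.mem_sdiff, Finset.mem_insert, Finset.mem_singleton] at hj
    rw [h3 j (fun h => hj.2 (Or.inl h)) (fun h => hj.2 (Or.inr h))]
  rw [Finset.sum_congr rfl hcongr, Finset.sum_pair hsa, Finset.sum_pair hsa, h1, h2]
  ring

end Stmt5Aux
section Stmt5Proof
open Stmt5Aux

theorem stmt5_part1 {n : ℕ} (hn : 2 ≤ n) (r : Fin n → ℝ)
    (hmono : ∀ i j : Fin n, i ≤ j → r j ≤ r i)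
    (hnonneg : ∀ i, 0 ≤ r i)
    (h12 : r ⟨1, by omega⟩ < r ⟨0, by omega⟩)
    (s : Fin n → Fin n) (hs : IsLocalMaxW r s) :
    ∀ k : Fin n, (k : ℕ) ≠ 0 → cnt s k ≤ 1 := by
  classical
  intro k hk
  by_contra hc
  push_neg at hc
  have hm2 : 2 ≤ cnt s k := hc
  have hmn : cnt s k ≤ n := cnt_le s k
  obtain ⟨i, hi⟩ : ∃ i, s i = k := by
    have hne : (Finset.univ.filter fun x => s x = k).Nonempty :=
      Finset.card_pos.1 (by unfold cnt at hm2; omega)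
    obtain ⟨i, hi⟩ := hne
    exact ⟨i, (Finset.mem_filter.1 hi).2⟩
  set z : Fin n := ⟨0, by omega⟩ with hzdef
  set o : Fin n := ⟨1, by omega⟩ with hodef
  have h12' : r o < r z := h12
  obtain ⟨m, hm⟩ : ∃ m, cnt s k = m + 1 := ⟨cnt s k - 1, by omega⟩
  have hm1n : m < n := by omega
  have hFk : Fsum r (cnt s k) = Fsum r m + r ⟨m, hm1n⟩ := by
    rw [hm]; exact Fsum_succ r hm1n
  have hmm : cnt s k - 1 = m := by omega
  have hrlast : r ⟨m, hm1n⟩ ≤ r o := hmono o ⟨m, hm1n⟩ (Fin.mk_le_mk.2 (by omega))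
  have hF1 : Fsum r (0 + 1) = r z := by
    rw [Fsum_succ r (by omega : 0 < n), Fsum_zero, zero_add]
  by_cases hA : ∃ j : Fin n, j ≠ z ∧ j ≠ k ∧ cnt s j = 0
  · obtain ⟨j, hj0, hjk, hjc⟩ := hA
    have hja : j ≠ s i := by rw [hi]; exact hjk
    have hle := hs i j
    rw [welfare_update r s i j hja, hi] at hle
    have hkw : ¬ ((k:ℕ) = 0) := hk
    have hjw : ¬ ((j:ℕ) = 0) := fun h => hj0 (Fin.ext h)
    rw [if_neg hkw, if_neg hjw, hjc, Fsum_zero, hF1, hmm, hFk] at hle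
    have hzo : r z ≤ r ⟨m, hm1n⟩ := by linarith
    linarith
  · push_neg at hA
    have hzk : z ≠ k := fun h => hk (by rw [← h])
    have hz0 : cnt s z = 0 := by
      have hsub : ({z, k} : Finset (Fin n)) ⊆ Finset.univ := Finset.subset_univ _
      have hsum : (∑ j ∈ Finset.univ \ ({z, k} : Finset (Fin n)), cnt s j)
          + (cnt s z + cnt s k) = n := by
        rw [← Finset.sum_pair hzk, Finset.sum_sdiff hsub, sum_cnt]
      have hcard : (Finset.univ \ ({z, k} : Finset (Fin n))).card = n - 2 := by
        rw [Finset.card_sdiff_of_subset hsub, Finset.card_pair hzk]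
        simp
      have hge : (Finset.univ \ ({z, k} : Finset (Fin n))).card
          ≤ ∑ j ∈ Finset.univ \ ({z, k} : Finset (Fin n)), cnt s j := by
        rw [Finset.card_eq_sum_ones]
        apply Finset.sum_le_sum
        intro j hj
        rw [Finset.mem_sdiff, Finset.mem_insert, Finset.mem_singleton] at hj
        have := hA j (fun h => hj.2 (Or.inl h)) (fun h => hj.2 (Or.inr h))
        omega
      omega
    have hza : z ≠ s i := by rw [hi]; exact hzk
    have hle := hs i z
    rw [welfare_update r s i z hza, hi] at hle
    have hkw : ¬ ((k:ℕ) = 0) := hk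
    have hzw : ((z:ℕ) = 0) := rfl
    rw [if_neg hkw, if_pos hzw, hz0, Fsum_zero, hF1, hmm, hFk] at hle
    have h1 : ((n:ℝ) + 1) * r z ≤ r ⟨m, hm1n⟩ := by linarith
    have h5 : (0:ℝ) ≤ (n:ℝ) * r z := mul_nonneg (Nat.cast_nonneg n) (hnonneg z)
    linarith
end Stmt5Proof
/-- In the TvN game with attention weights
`r₁ > r₂ ≥ ⋯ ≥ r_K ≥ 0 = r_{K+1} = ⋯ = rₙ`, at every local maximizer of the welfare
at most one creator plays `e_k` for each `k ≠ 1`, and the welfare equals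
`(n+1) ∑_{i=1}^{min(K,q)} rᵢ + (n − q) r₁` where `q` is the number of creators playing `e₁`. -/
theorem stmt5 {n : ℕ} (hn : 2 ≤ n) (K : ℕ) (hK1 : 1 ≤ K) (hKn : K ≤ n)
    (r : Fin n → ℝ)
    (hmono : ∀ i j : Fin n, i ≤ j → r j ≤ r i)
    (hnonneg : ∀ i, 0 ≤ r i)
    (hzero : ∀ k : Fin n, K ≤ (k : ℕ) → r k = 0)
    (h12 : r ⟨1, by omega⟩ < r ⟨0, by omega⟩)
    (s : Fin n → Fin n) (hs : IsLocalMaxW r s) :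
    (∀ k : Fin n, (k : ℕ) ≠ 0 → cnt s k ≤ 1) ∧
    tvnWelfare r s =
      (n + 1 : ℝ) * (∑ i : Fin n, if (i : ℕ) < min K (cnt s ⟨0, by omega⟩) then r i else 0)
        + ((n : ℝ) - (cnt s ⟨0, by omega⟩ : ℕ)) * r ⟨0, by omega⟩ := by
  classical
  open Stmt5Aux in
  have hpart1 := stmt5_part1 hn r hmono hnonneg h12 s hs
  refine ⟨hpart1, ?_⟩
  set z : Fin n := ⟨0, by omega⟩ with hzdef
  set q : ℕ := cnt s z with hqdef
  have hqn : q ≤ n := Stmt5Aux.cnt_le s z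
  have hF1 : Stmt5Aux.Fsum r 1 = r z := by
    rw [show (1:ℕ) = 0 + 1 from rfl, Stmt5Aux.Fsum_succ r (by omega : 0 < n),
      Stmt5Aux.Fsum_zero, zero_add]
  -- erase-sum of counts
  have hsumerase : (∑ j ∈ Finset.univ.erase z, cnt s j) + q = n := by
    rw [Finset.sum_erase_add _ _ (Finset.mem_univ z), Stmt5Aux.sum_cnt]
  -- welfare split
  rw [Stmt5Aux.tvn_eq, ← Finset.sum_erase_add _ _ (Finset.mem_univ z)]
  have hzw : ((z:ℕ) = 0) := rfl
  rw [if_pos hzw]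
  -- erase part
  have herase : ∀ j ∈ Finset.univ.erase z,
      (if (j:ℕ) = 0 then (n+1:ℝ) else 1) * Stmt5Aux.Fsum r (cnt s j)
        = (cnt s j : ℝ) * r z := by
    intro j hj
    have hjz : j ≠ z := Finset.ne_of_mem_erase hj
    have hjw : ¬ ((j:ℕ) = 0) := fun h => hjz (Fin.ext h)
    rw [if_neg hjw, one_mul]
    have hle1 : cnt s j ≤ 1 := hpart1 j hjw
    interval_cases h : cnt s j
    · rw [Stmt5Aux.Fsum_zero]; simp
    · rw [hF1]; simp
  rw [Finset.sum_congr rfl herase]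
  have hcast : (∑ j ∈ Finset.univ.erase z, (cnt s j : ℝ) * r z)
      = ((n:ℝ) - (q:ℕ)) * r z := by
    rw [← Finset.sum_mul, ← Nat.cast_sum]
    congr 1
    have : ∑ j ∈ Finset.univ.erase z, cnt s j = n - q := by omega
    rw [this, Nat.cast_sub hqn]
  rw [hcast]
  -- F q = truncated sum
  have hFq : Stmt5Aux.Fsum r q
      = ∑ i : Fin n, if (i : ℕ) < min K q then r i else 0 := by
    unfold Stmt5Aux.Fsum
    apply Finset.sum_congr rfl
    intro k _
    by_cases h1 : (k:ℕ) < q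
    · by_cases h2 : (k:ℕ) < K
      · rw [if_pos h1, if_pos (by omega)]
      · rw [if_pos h1, if_neg (by omega), hzero k (by omega)]
    · rw [if_neg h1, if_neg (by omega)]
  rw [hFq]
  ring
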